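/- The projection operator P^n F(w) = ∫_ℂ F(z) K^n(w,z) e^{−π|z|²} dA(z), with K^n(w,z) = ∑_{k=0}^n binom(n,k)(1/k!)(−π|w−z|²)^k e^{π z̄ w}, is bounded on the weighted space L_p(ℂ) for every 1 ≤ p ≤ ∞: there is a constant C_n with ‖P^n F‖_{L_p(ℂ)} ≤ C_n ‖F‖_{L_p(ℂ)}. -/

import Mathlib

open ComplexConjugate MeasureTheory

noncomputable section

/-- The reproducing kernel
`K^n(w,z) = ∑_{k=0}^n C(n,k)(1/k!)(-π|w-z|²)^k e^{π z̄ w}`. -/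
def polyKernel (n : ℕ) (w z : ℂ) : ℂ :=
  ∑ k ∈ Finset.range (n + 1), (n.choose k : ℂ) * (1 / (k.factorial : ℂ)) *
    (-Real.pi * Complex.normSq (w - z)) ^ k * Complex.exp (Real.pi * conj z * w)

/-- The projection `P^n F(w) = ∫ F(z) K^n(w,z) e^{-π|z|²} dA(z)`. -/
def polyProj (n : ℕ) (F : ℂ → ℂ) (w : ℂ) : ℂ :=
  ∫ z : ℂ, F z * polyKernel n w z * Real.exp (-Real.pi * Complex.normSq z)

/-- The weighted `L_p(ℂ)` norm. -/
def wLpNorm (F : ℂ → ℂ) (p : ENNReal) : ENNReal :=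
  eLpNorm (fun z : ℂ => F z * Real.exp (-Real.pi * Complex.normSq z / 2)) p
    (volume : Measure ℂ)

/-!
Once the Gaussian weights are attached, the kernel is dominated by a translation-invariant
integrable kernel:
`|K^n(w,z)| e^{-π|w|²/2} e^{-π|z|²/2} ≤ Ψ(w - z)`, because
`π Re(z̄ w) - π|w|²/2 - π|z|²/2 = -π|w - z|²/2`, and `Ψ(u) ≤ 5ⁿ e^{-π|u|²/4}` is integrable.
So `|P^n F(w)| e^{-π|w|²/2}` is bounded by the convolution of `|F| e^{-π|·|²/2}` with `Ψ`, and
Young's inequality `‖f ⋆ Ψ‖_p ≤ ‖Ψ‖₁ ‖f‖_p`, an instance of the Schur test, bounds its `L_p` norm.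
-/

open ENNReal Real

namespace MeasureTheory

variable {α β : Type*} [MeasurableSpace α] [MeasurableSpace β] {μ : Measure α} {ν : Measure β}

theorem rpow_lintegral_mul_le_lintegral_rpow_mul {f g : β → ℝ≥0∞}
    (hf : AEMeasurable f ν) (hg : AEMeasurable g ν) {p : ℝ} (hp : 1 ≤ p) :
    (∫⁻ z, g z * f z ∂ν) ^ p ≤ (∫⁻ z, f z ∂ν) ^ (p - 1) * ∫⁻ z, g z ^ p * f z ∂ν := by
  have hp0 : 0 < p := by linarith
  have hq : 0 ≤ 1 - 1 / p := by rw [sub_nonneg, div_le_one hp0]; exact hp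
  have hholder := ENNReal.lintegral_mul_norm_pow_le (g := fun z => g z ^ p * f z) hf
    ((hg.pow_const p).mul hf) hq (by positivity) (sub_add_cancel 1 (1 / p))
  have hsplit (z : β) : f z ^ (1 - 1 / p) * (g z ^ p * f z) ^ (1 / p) = g z * f z := by
    rw [ENNReal.mul_rpow_of_nonneg _ _ (by positivity), ← ENNReal.rpow_mul,
      mul_one_div_cancel hp0.ne', ENNReal.rpow_one, mul_left_comm,
      ← ENNReal.rpow_add_of_nonneg _ _ hq (by positivity), sub_add_cancel, ENNReal.rpow_one,
      mul_comm]
  simp only [hsplit] at hholder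
  calc (∫⁻ z, g z * f z ∂ν) ^ p
      ≤ ((∫⁻ z, f z ∂ν) ^ (1 - 1 / p) * (∫⁻ z, g z ^ p * f z ∂ν) ^ (1 / p)) ^ p :=
        ENNReal.rpow_le_rpow hholder hp0.le
    _ = (∫⁻ z, f z ∂ν) ^ (p - 1) * ∫⁻ z, g z ^ p * f z ∂ν := by
        rw [ENNReal.mul_rpow_of_nonneg _ _ hp0.le, ← ENNReal.rpow_mul, ← ENNReal.rpow_mul,
          one_div_mul_cancel hp0.ne', ENNReal.rpow_one, sub_mul, one_div_mul_cancel hp0.ne',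
          one_mul]

variable [SFinite μ] [SFinite ν] {k : α → β → ℝ≥0∞} {g : β → ℝ≥0∞} {A : ℝ≥0∞}

theorem lintegral_rpow_lintegral_mul_kernel_le (hk : Measurable (Function.uncurry k))
    (hg : AEMeasurable g ν) (hrow : ∀ w, ∫⁻ z, k w z ∂ν ≤ A) (hcol : ∀ z, ∫⁻ w, k w z ∂μ ≤ A)
    {p : ℝ} (hp : 1 ≤ p) :
    ∫⁻ w, (∫⁻ z, g z * k w z ∂ν) ^ p ∂μ ≤ A ^ p * ∫⁻ z, g z ^ p ∂ν := by
  have hk_w (w : α) : Measurable (k w) := hk.of_uncurry_left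
  have hk_z (z : β) : Measurable (k · z) := hk.of_uncurry_right
  have hprod : AEMeasurable (Function.uncurry fun w z => g z ^ p * k w z) (μ.prod ν) :=
    (hg.pow_const p).comp_snd.mul hk.aemeasurable
  calc ∫⁻ w, (∫⁻ z, g z * k w z ∂ν) ^ p ∂μ
      ≤ ∫⁻ w, A ^ (p - 1) * ∫⁻ z, g z ^ p * k w z ∂ν ∂μ := by
        refine lintegral_mono fun w => ?_
        grw [rpow_lintegral_mul_le_lintegral_rpow_mul (hk_w w).aemeasurable hg hp, hrow w]
        linarith
    _ = A ^ (p - 1) * ∫⁻ z, g z ^ p * ∫⁻ w, k w z ∂μ ∂ν := by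
        have hint : AEMeasurable (fun w => ∫⁻ z, g z ^ p * k w z ∂ν) μ :=
          hprod.lintegral_prod_right'
        rw [lintegral_const_mul'' _ hint, lintegral_lintegral_swap hprod]
        congr 1
        refine lintegral_congr fun z => ?_
        rw [lintegral_const_mul _ (hk_z z)]
    _ ≤ A ^ (p - 1) * ∫⁻ z, g z ^ p * A ∂ν := by
        gcongr with z
        exact hcol z
    _ = A ^ p * ∫⁻ z, g z ^ p ∂ν := by
        have hApow : A ^ (p - 1) * A = A ^ p := by
          simpa using (ENNReal.rpow_add_of_nonneg (x := A) _ _ (sub_nonneg.2 hp) zero_le_one).symm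
        rw [lintegral_mul_const'' _ (hg.pow_const p), mul_comm _ A, ← mul_assoc, hApow]

theorem eLpNorm_lintegral_mul_kernel_le (hk : Measurable (Function.uncurry k))
    (hg : AEMeasurable g ν) (hrow : ∀ w, ∫⁻ z, k w z ∂ν ≤ A) (hcol : ∀ z, ∫⁻ w, k w z ∂μ ≤ A)
    {p : ℝ≥0∞} (hp : 1 ≤ p) :
    eLpNorm (fun w => ∫⁻ z, g z * k w z ∂ν) p μ ≤ A * eLpNorm g p ν := by
  rcases eq_or_ne p ∞ with rfl | hp_top
  · simp only [eLpNorm_exponent_top]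
    refine eLpNormEssSup_le_of_ae_enorm_bound (ae_of_all _ fun w => ?_)
    calc ∫⁻ z, g z * k w z ∂ν ≤ ∫⁻ z, eLpNormEssSup g ν * k w z ∂ν :=
          lintegral_mono_ae <| (ae_le_eLpNormEssSup (f := g)).mono fun z hz => by
            rw [enorm_eq_self] at hz
            gcongr
      _ ≤ A * eLpNormEssSup g ν := by
          rw [lintegral_const_mul _ hk.of_uncurry_left, mul_comm]
          gcongr
          exact hrow w
  have hp0 : p ≠ 0 := (zero_lt_one.trans_le hp).ne'
  have hpr : 1 ≤ p.toReal := by simpa using ENNReal.toReal_mono hp_top hp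
  simp only [eLpNorm_eq_lintegral_rpow_enorm_toReal hp0 hp_top, enorm_eq_self]
  calc (∫⁻ w, (∫⁻ z, g z * k w z ∂ν) ^ p.toReal ∂μ) ^ (1 / p.toReal)
      ≤ (A ^ p.toReal * ∫⁻ z, g z ^ p.toReal ∂ν) ^ (1 / p.toReal) := by
        gcongr
        exact lintegral_rpow_lintegral_mul_kernel_le hk hg hrow hcol hpr
    _ = A * (∫⁻ z, g z ^ p.toReal ∂ν) ^ (1 / p.toReal) := by
        rw [ENNReal.mul_rpow_of_nonneg _ _ (by positivity), ← ENNReal.rpow_mul,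
          mul_one_div_cancel (by linarith), ENNReal.rpow_one]

theorem eLpNorm_lconvolution_le {G : Type*} [AddGroup G] [MeasurableSpace G]
    [MeasurableAdd₂ G] [MeasurableNeg G] {μ : Measure G} [SFinite μ] [μ.IsAddLeftInvariant]
    [μ.IsNegInvariant] {f g : G → ℝ≥0∞} (hf : AEMeasurable f μ) (hg : Measurable g)
    {p : ℝ≥0∞} (hp : 1 ≤ p) :
    eLpNorm (f ⋆ₗ[μ] g) p μ ≤ (∫⁻ x, g x ∂μ) * eLpNorm f p μ := by
  have hrow (x : G) : ∫⁻ y, g (-y + x) ∂μ = ∫⁻ y, g y ∂μ :=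
    calc ∫⁻ y, g (-y + x) ∂μ = ∫⁻ y, g (-(-x + y)) ∂μ := by simp only [neg_add_rev, neg_neg]
      _ = ∫⁻ y, g (-y) ∂μ := lintegral_add_left_eq_self (fun y => g (-y)) (-x)
      _ = ∫⁻ y, g y ∂μ := lintegral_neg_eq_self g
  exact eLpNorm_lintegral_mul_kernel_le (k := fun x y => g (-y + x)) (by fun_prop) hf
    (fun x => (hrow x).le) (fun y => (lintegral_add_left_eq_self g (-y)).le) hp

end MeasureTheory

theorem integrable_exp_neg_mul_sq_norm {V : Type*} [NormedAddCommGroup V] [InnerProductSpace ℝ V]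
    [FiniteDimensional ℝ V] [MeasurableSpace V] [BorelSpace V] {b : ℝ} (hb : 0 < b) :
    Integrable (fun v : V => rexp (-b * ‖v‖ ^ 2)) := by
  refine (GaussianFourier.integrable_cexp_neg_mul_sq_norm_add (b := b) (by simpa using hb) 0
    (0 : V)).norm.congr (ae_of_all _ fun v => ?_)
  simp [Complex.norm_exp, ← Complex.ofReal_pow]

-- `majorantPoly n t = L_n(-t)` for the Laguerre polynomial `L_n`; the kernel is
-- `K^n(w,z) = L_n(π|w - z|²) e^{π z̄ w}`.
def majorantPoly (n : ℕ) (t : ℝ) : ℝ :=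
  ∑ k ∈ Finset.range (n + 1), (n.choose k : ℝ) * t ^ k / k.factorial

def polyKernelMajorant (n : ℕ) (u : ℂ) : ℝ :=
  majorantPoly n (π * Complex.normSq u) * rexp (-π * Complex.normSq u / 2)

theorem majorantPoly_le (n : ℕ) {t : ℝ} (ht : 0 ≤ t) :
    majorantPoly n t ≤ 5 ^ n * rexp (t / 4) := by
  have hterm (k : ℕ) : t ^ k / k.factorial ≤ 4 ^ k * rexp (t / 4) := by
    calc t ^ k / k.factorial = 4 ^ k * ((t / 4) ^ k / k.factorial) := by
          rw [div_pow]; field_simp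
      _ ≤ 4 ^ k * rexp (t / 4) := by gcongr; exact pow_div_factorial_le_exp _ (by positivity) k
  calc majorantPoly n t
      ≤ ∑ k ∈ Finset.range (n + 1), (n.choose k : ℝ) * (4 ^ k * rexp (t / 4)) := by
        refine Finset.sum_le_sum fun k _ => ?_
        rw [mul_div_assoc]
        gcongr
        exact hterm k
    _ = 5 ^ n * rexp (t / 4) := by
        rw [show (5 : ℝ) = 4 + 1 by norm_num, add_pow, Finset.sum_mul]
        refine Finset.sum_congr rfl fun k _ => ?_
        ring

theorem polyKernelMajorant_le (n : ℕ) (u : ℂ) :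
    polyKernelMajorant n u ≤ 5 ^ n * rexp (-(π / 4) * ‖u‖ ^ 2) := by
  have ht : 0 ≤ π * Complex.normSq u := mul_nonneg pi_pos.le (Complex.normSq_nonneg u)
  calc polyKernelMajorant n u
      ≤ 5 ^ n * rexp (π * Complex.normSq u / 4) * rexp (-π * Complex.normSq u / 2) := by
        unfold polyKernelMajorant
        gcongr
        exact majorantPoly_le n ht
    _ = 5 ^ n * rexp (-(π / 4) * ‖u‖ ^ 2) := by
        rw [mul_assoc, ← Real.exp_add, Complex.normSq_eq_norm_sq]
        ring_nf

theorem lintegral_polyKernelMajorant_lt_top (n : ℕ) :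
    ∫⁻ u, ENNReal.ofReal (polyKernelMajorant n u) < ∞ :=
  calc ∫⁻ u, ENNReal.ofReal (polyKernelMajorant n u)
      ≤ ∫⁻ u : ℂ, ENNReal.ofReal (5 ^ n * rexp (-(π / 4) * ‖u‖ ^ 2)) :=
        lintegral_mono fun u => ENNReal.ofReal_le_ofReal (polyKernelMajorant_le n u)
    _ < ∞ :=
        ((integrable_exp_neg_mul_sq_norm (b := π / 4) (by positivity)).const_mul _).lintegral_lt_top

theorem measurable_polyKernelMajorant (n : ℕ) : Measurable (polyKernelMajorant n) := by
  unfold polyKernelMajorant majorantPoly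
  fun_prop

theorem norm_polyKernel_le (n : ℕ) (w z : ℂ) :
    ‖polyKernel n w z‖ ≤
      majorantPoly n (π * Complex.normSq (w - z)) * rexp (π * (conj z * w).re) := by
  unfold polyKernel majorantPoly
  rw [Finset.sum_mul]
  refine (norm_sum_le _ _).trans (Finset.sum_le_sum fun k _ => le_of_eq ?_)
  have hexp : ‖Complex.exp (π * conj z * w)‖ = rexp (π * (conj z * w).re) := by
    rw [Complex.norm_exp, mul_assoc, Complex.re_ofReal_mul]
  simp only [norm_mul, norm_pow, norm_neg, hexp, norm_div, norm_one, Complex.norm_natCast,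
    Complex.norm_real, norm_eq_abs, abs_of_nonneg pi_pos.le,
    abs_of_nonneg (Complex.normSq_nonneg _)]
  ring

theorem norm_polyKernel_mul_exp_le (n : ℕ) (w z : ℂ) :
    ‖polyKernel n w z‖ * rexp (-π * Complex.normSq w / 2) * rexp (-π * Complex.normSq z / 2) ≤
      polyKernelMajorant n (w - z) := by
  have hexp : π * (conj z * w).re + -π * Complex.normSq w / 2 + -π * Complex.normSq z / 2 =
      -π * Complex.normSq (w - z) / 2 := by
    rw [Complex.normSq_sub, mul_comm (conj z)]
    ring
  calc ‖polyKernel n w z‖ * rexp (-π * Complex.normSq w / 2) * rexp (-π * Complex.normSq z / 2)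
      ≤ majorantPoly n (π * Complex.normSq (w - z)) * rexp (π * (conj z * w).re) *
          rexp (-π * Complex.normSq w / 2) * rexp (-π * Complex.normSq z / 2) := by
        gcongr
        exact norm_polyKernel_le n w z
    _ = polyKernelMajorant n (w - z) := by
        rw [polyKernelMajorant, mul_assoc, mul_assoc, ← Real.exp_add, ← Real.exp_add, ← add_assoc,
          hexp]

def gaussianWeighted (F : ℂ → ℂ) (z : ℂ) : ℂ :=
  F z * rexp (-π * Complex.normSq z / 2)

theorem enorm_gaussianWeighted_polyProj_le (n : ℕ) (F : ℂ → ℂ) (w : ℂ) :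
    ‖gaussianWeighted (polyProj n F) w‖ₑ ≤
      ((fun z => ‖gaussianWeighted F z‖ₑ) ⋆ₗ (ENNReal.ofReal ∘ polyKernelMajorant n)) w := by
  have hweight (z : ℂ) : rexp (-π * Complex.normSq z) =
      rexp (-π * Complex.normSq z / 2) * rexp (-π * Complex.normSq z / 2) := by
    rw [← Real.exp_add]; ring_nf
  have hintegrand (z : ℂ) :
      ‖F z * polyKernel n w z * rexp (-π * Complex.normSq z)‖ * rexp (-π * Complex.normSq w / 2) ≤
        ‖gaussianWeighted F z‖ * polyKernelMajorant n (w - z) := by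
    simp only [gaussianWeighted, norm_mul, Complex.norm_real, norm_eq_abs, abs_exp, hweight]
    calc ‖F z‖ * ‖polyKernel n w z‖ *
          (rexp (-π * Complex.normSq z / 2) * rexp (-π * Complex.normSq z / 2)) *
          rexp (-π * Complex.normSq w / 2)
        = ‖F z‖ * rexp (-π * Complex.normSq z / 2) * (‖polyKernel n w z‖ *
          rexp (-π * Complex.normSq w / 2) * rexp (-π * Complex.normSq z / 2)) := by ring
      _ ≤ ‖F z‖ * rexp (-π * Complex.normSq z / 2) * polyKernelMajorant n (w - z) := by
        gcongr
        exact norm_polyKernel_mul_exp_le n w z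
  calc ‖gaussianWeighted (polyProj n F) w‖ₑ
      = ‖polyProj n F w‖ₑ * ‖(rexp (-π * Complex.normSq w / 2) : ℂ)‖ₑ := enorm_mul _ _
    _ ≤ (∫⁻ z, ‖F z * polyKernel n w z * rexp (-π * Complex.normSq z)‖ₑ) *
          ‖(rexp (-π * Complex.normSq w / 2) : ℂ)‖ₑ := by
        gcongr
        exact enorm_integral_le_lintegral_enorm _
    _ = ∫⁻ z, ‖F z * polyKernel n w z * rexp (-π * Complex.normSq z)‖ₑ *
          ‖(rexp (-π * Complex.normSq w / 2) : ℂ)‖ₑ := (lintegral_mul_const' _ _ enorm_ne_top).symm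
    _ ≤ ∫⁻ z, ‖gaussianWeighted F z‖ₑ * ENNReal.ofReal (polyKernelMajorant n (-z + w)) := by
        refine lintegral_mono fun z => ?_
        rw [neg_add_eq_sub, ← ofReal_norm, ← ofReal_norm, ← ofReal_norm,
          ← ENNReal.ofReal_mul (norm_nonneg _), ← ENNReal.ofReal_mul (norm_nonneg _),
          Complex.norm_real, Real.norm_of_nonneg (exp_nonneg _)]
        exact ENNReal.ofReal_le_ofReal (hintegrand z)

/-- The projection `P^n` is bounded on the weighted space `L_p(ℂ)` for every `1 ≤ p ≤ ∞`. -/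
theorem polyProj_bounded (n : ℕ) :
    ∃ C : ℝ, 0 < C ∧ ∀ p : ENNReal, 1 ≤ p → ∀ F : ℂ → ℂ,
      MemLp (fun z : ℂ => F z * Real.exp (-Real.pi * Complex.normSq z / 2)) p
        (volume : Measure ℂ) →
      wLpNorm (polyProj n F) p ≤ ENNReal.ofReal C * wLpNorm F p := by
  set Ψ : ℂ → ℝ≥0∞ := ENNReal.ofReal ∘ polyKernelMajorant n
  have hΨ_lt_top : ∫⁻ u, Ψ u < ∞ := lintegral_polyKernelMajorant_lt_top n
  have hΨ : ∫⁻ u, Ψ u ≤ ENNReal.ofReal ((∫⁻ u, Ψ u).toReal + 1) :=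
    (ENNReal.ofReal_toReal hΨ_lt_top.ne).symm.trans_le
      (ENNReal.ofReal_le_ofReal (by linarith))
  refine ⟨(∫⁻ u, Ψ u).toReal + 1, by positivity, fun p hp F hF => ?_⟩
  calc wLpNorm (polyProj n F) p
      ≤ eLpNorm ((fun z => ‖gaussianWeighted F z‖ₑ) ⋆ₗ Ψ) p volume :=
        eLpNorm_mono_enorm fun w =>
          (enorm_gaussianWeighted_polyProj_le n F w).trans_eq (enorm_eq_self _).symm
    _ ≤ (∫⁻ u, Ψ u) * wLpNorm F p :=
        (eLpNorm_lconvolution_le hF.aestronglyMeasurable.enorm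
          (ENNReal.measurable_ofReal.comp (measurable_polyKernelMajorant n)) hp).trans_eq
          (by rw [eLpNorm_enorm]; rfl)
    _ ≤ ENNReal.ofReal ((∫⁻ u, Ψ u).toReal + 1) * wLpNorm F p := by gcongr
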